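/- Suppose for class weight w and embeddings zᵢ, zⱼ the predicted probabilities satisfy σ(⟪w, zᵢ⟫) ≥ 1 - ε and σ(⟪w, zⱼ⟫) ≥ 1 - ε with 0 < ε < 1/2, and all vectors are unit. Then, whenever log((1-ε)/ε) ≤ 1, we have ‖w - zᵢ‖² ≤ 2 - 2·log((1-ε)/ε), and hence ‖zᵢ - zⱼ‖ ≤ 2·√(2 - 2·log((1-ε)/ε)). -/

import Mathlib

lemma sigmoid_ge_imp {t ε : ℝ} (hε0 : 0 < ε) (hε : ε < 1/2)
    (h : (1 + Real.exp (-t))⁻¹ ≥ 1 - ε) : Real.log ((1 - ε) / ε) ≤ t := by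
  have h1 : (0:ℝ) < 1 - ε := by linarith
  have hpos : (0:ℝ) < 1 + Real.exp (-t) := by positivity
  have h2 : 1 + Real.exp (-t) ≤ (1 - ε)⁻¹ := by
    rw [ge_iff_le, le_inv_comm₀ h1 hpos] at h
    exact h
  have h3 : Real.exp (-t) ≤ ε / (1 - ε) := by
    have : (1 - ε)⁻¹ = 1 + ε / (1 - ε) := by field_simp; ring
    linarith [this ▸ h2]
  have h4 : Real.log (ε / (1 - ε)) = - Real.log ((1 - ε) / ε) := by
    rw [Real.log_div (by linarith) (by linarith), Real.log_div (by linarith) (by linarith)]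
    ring
  have h5 : -t ≤ Real.log (ε / (1 - ε)) := by
    have := Real.log_le_log (Real.exp_pos _) h3
    rwa [Real.log_exp] at this
  linarith [h4 ▸ h5]

theorem embedding_close_of_confident {E : Type*} [NormedAddCommGroup E] [InnerProductSpace ℝ E]
    (w zi zj : E) (hw : ‖w‖ = 1) (hzi : ‖zi‖ = 1) (hzj : ‖zj‖ = 1)
    (ε : ℝ) (hε0 : 0 < ε) (hε : ε < 1 / 2) (hlog : Real.log ((1 - ε) / ε) ≤ 1)
    (hi : (1 + Real.exp (-(inner ℝ w zi : ℝ)))⁻¹ ≥ 1 - ε)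
    (hj : (1 + Real.exp (-(inner ℝ w zj : ℝ)))⁻¹ ≥ 1 - ε) :
    ‖w - zi‖ ^ 2 ≤ 2 - 2 * Real.log ((1 - ε) / ε) ∧
    ‖zi - zj‖ ≤ 2 * Real.sqrt (2 - 2 * Real.log ((1 - ε) / ε)) := by
  set L := Real.log ((1 - ε) / ε) with hL
  have hi' : L ≤ (inner ℝ w zi : ℝ) := sigmoid_ge_imp hε0 hε hi
  have hj' : L ≤ (inner ℝ w zj : ℝ) := sigmoid_ge_imp hε0 hε hj
  have key : ∀ z : E, ‖z‖ = 1 → L ≤ (inner ℝ w z : ℝ) → ‖w - z‖ ^ 2 ≤ 2 - 2 * L := by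
    intro z hz hiz
    have : ‖w - z‖ ^ 2 = 2 - 2 * (inner ℝ w z : ℝ) := by
      rw [@norm_sub_sq_real, hw, hz]; ring
    linarith [this]
  have h1 := key zi hzi hi'
  have h2 := key zj hzj hj'
  refine ⟨h1, ?_⟩
  have hnn : (0:ℝ) ≤ 2 - 2 * L := by linarith
  have hs1 : ‖w - zi‖ ≤ Real.sqrt (2 - 2 * L) := by
    rw [← Real.sqrt_sq (norm_nonneg _)]
    exact Real.sqrt_le_sqrt h1
  have hs2 : ‖w - zj‖ ≤ Real.sqrt (2 - 2 * L) := by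
    rw [← Real.sqrt_sq (norm_nonneg _)]
    exact Real.sqrt_le_sqrt h2
  calc ‖zi - zj‖ = ‖(zi - w) + (w - zj)‖ := by abel_nf
    _ ≤ ‖zi - w‖ + ‖w - zj‖ := norm_add_le _ _
    _ = ‖w - zi‖ + ‖w - zj‖ := by rw [norm_sub_rev]
    _ ≤ 2 * Real.sqrt (2 - 2 * L) := by linarith
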